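/- The prime spectrum of R is normally separated: whenever P_0 ⊊ P_1 are prime two-sided ideals of R, there exists y ∈ P_1 with y ∉ P_0 such that y is normal modulo P_0, i.e. Ry + P_0 = yR + P_0. -/

import Mathlib

/-!
Common setup: `q`-commutative power series ring `R = k_q[[x_1,…,x_n]]` and
`q`-commutative Laurent series ring `L = k_q[[x_1^{±1},…,x_n^{±1}]]`, characterized
by their coefficient descriptions (twisted convolution multiplication).
-/

noncomputable section

/-- A multiplicatively antisymmetric `n × n` matrix over `k`:
`q_{ii} = 1` and `q_{ij} q_{ji} = 1`. -/
structure QMatrix (k : Type*) [Field k] (n : ℕ) where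
  q : Fin n → Fin n → k
  diag : ∀ i, q i i = 1
  antisym : ∀ i j, q i j * q j i = 1

namespace QMatrix

variable {k : Type*} [Field k] {n : ℕ} (Q : QMatrix k n)

lemma q_ne_zero (i j : Fin n) : Q.q i j ≠ 0 := fun h0 => by
  have h1 := Q.antisym i j
  rw [h0, zero_mul] at h1
  exact zero_ne_one h1

/-- The twisting weight `∏_{1 ≤ j < i ≤ n} q_{ij}^{u_i v_j}` (natural exponents), so that
`x^u · x^v = weight u v · x^{u+v}` in `R`. -/
def weight (u v : Fin n →₀ ℕ) : k :=
  ∏ i : Fin n, ∏ j : Fin n, if j < i then Q.q i j ^ (u i * v j) else 1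

/-- The twisting weight `∏_{1 ≤ j < i ≤ n} q_{ij}^{u_i v_j}` (integer exponents), so that
`x^u · x^v = zweight u v · x^{u+v}` in `L`. -/
def zweight (u v : Fin n → ℤ) : k :=
  ∏ i : Fin n, ∏ j : Fin n, if j < i then Q.q i j ^ (u i * v j) else 1

/-- The alternating bicharacter `σ(s,t) = ∏_{i,j} q_{ij}^{s_i t_j}`, so that
`x^s x^t = σ(s,t) x^t x^s` in `L`. -/
def sigma (s t : Fin n → ℤ) : k :=
  ∏ i : Fin n, ∏ j : Fin n, Q.q i j ^ (s i * t j)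

end QMatrix

/-- `R` is (a model of) the `q`-commutative power series ring `k_q[[x_1, …, x_n]]`:
its underlying `k`-vector space is that of all families of coefficients indexed by `ℕ^n`,
the constant series `1` is the multiplicative unit, and multiplication is given by the
twisted convolution: the coefficient of `x^s` in `f·g` is
`∑_{u+v=s} f_u g_v ∏_{1≤j<i≤n} q_{ij}^{u_i v_j}`. -/
structure IsQPowerSeriesRing {k : Type*} [Field k] {n : ℕ} (Q : QMatrix k n)
    (R : Type*) [Ring R] [Algebra k R] where
  coeff : R ≃ₗ[k] ((Fin n →₀ ℕ) → k)
  coeff_one : ∀ s, coeff 1 s = if s = 0 then 1 else 0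
  coeff_mul : ∀ f g : R, ∀ s, coeff (f * g) s =
    ∑ uv ∈ Finset.HasAntidiagonal.antidiagonal s, coeff f uv.1 * coeff g uv.2 * Q.weight uv.1 uv.2

namespace IsQPowerSeriesRing

variable {k : Type*} [Field k] {n : ℕ} {Q : QMatrix k n}
variable {R : Type*} [Ring R] [Algebra k R] (h : IsQPowerSeriesRing Q R)

/-- The monic monomial `x^s` of `R`. -/
def mono (s : Fin n →₀ ℕ) : R :=
  h.coeff.symm (fun t => if t = s then 1 else 0)

/-- The variable `x_i` of `R`. -/
def X (i : Fin n) : R := h.mono (Finsupp.single i 1)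

/-- The augmentation ideal `J = ⟨x_1, …, x_n⟩` of `R`, as a two-sided ideal. -/
def Jideal : TwoSidedIdeal R := TwoSidedIdeal.span (Set.range h.X)

/-- For `w ⊆ {1,…,n}`, the two-sided ideal `J_w = ⟨x_i : i ∈ w⟩` of `R`. -/
def Jw (w : Finset (Fin n)) : TwoSidedIdeal R :=
  TwoSidedIdeal.span {r : R | ∃ i ∈ w, r = h.X i}

/-- The action of `θ ∈ H = (kˣ)^n` on `R`, determined by
`x^s ↦ θ_1^{s_1} ⋯ θ_n^{s_n} x^s` and applied coefficientwise to series. -/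
def hAct (θ : Fin n → kˣ) (f : R) : R :=
  h.coeff.symm (fun s => (∏ i, (θ i : k) ^ (s i)) * h.coeff f s)

/-- A two-sided ideal of `R` is `H`-stable if it is mapped to itself by every element
of the torus `H = (kˣ)^n`. -/
def IsHStable (I : TwoSidedIdeal R) : Prop :=
  ∀ θ : Fin n → kˣ, h.hAct θ '' (I : Set R) = (I : Set R)

end IsQPowerSeriesRing

/-- A coefficient family `c : ℤ^n → k` is Laurent-bounded if `c s = 0` whenever some
coordinate of `s` is sufficiently negative, i.e. `∃ N, min(s_1,…,s_n) < -N → c s = 0`. -/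
def LaurentBounded {k : Type*} [Field k] {n : ℕ} (c : (Fin n → ℤ) → k) : Prop :=
  ∃ N : ℕ, ∀ s : Fin n → ℤ, (∃ i, s i < -(N : ℤ)) → c s = 0

/-- `L` is (a model of) the `q`-commutative Laurent series ring
`k_q[[x_1^{±1}, …, x_n^{±1}]]`: its elements correspond, `k`-linearly, to the
Laurent-bounded coefficient families indexed by `ℤ^n`, the constant series `1` is the
multiplicative unit, and multiplication is given by the twisted convolution. -/
structure IsQLaurentSeriesRing {k : Type*} [Field k] {n : ℕ} (Q : QMatrix k n)
    (L : Type*) [Ring L] [Algebra k L] where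
  coeff : L →ₗ[k] ((Fin n → ℤ) → k)
  coeff_injective : Function.Injective coeff
  coeff_bounded : ∀ f, LaurentBounded (coeff f)
  coeff_surjective : ∀ c, LaurentBounded c → ∃ f, coeff f = c
  coeff_one : ∀ s, coeff 1 s = if s = 0 then 1 else 0
  mul_support_finite : ∀ f g : L, ∀ s : Fin n → ℤ,
    (Function.support fun u => coeff f u * coeff g (s - u) * Q.zweight u (s - u)).Finite
  coeff_mul : ∀ f g : L, ∀ s : Fin n → ℤ, coeff (f * g) s =
    ∑ᶠ u : Fin n → ℤ, coeff f u * coeff g (s - u) * Q.zweight u (s - u)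

namespace IsQLaurentSeriesRing

variable {k : Type*} [Field k] {n : ℕ} {Q : QMatrix k n}
variable {L : Type*} [Ring L] [Algebra k L] (h : IsQLaurentSeriesRing Q L)

/-- The action of `θ ∈ H = (kˣ)^n` on `L`, determined by
`x^s ↦ θ_1^{s_1} ⋯ θ_n^{s_n} x^s` and applied coefficientwise to series. -/
def hAct (θ : Fin n → kˣ) (f : L) : L :=
  Classical.choose (h.coeff_surjective
    (fun s => (∏ i, ((θ i ^ (s i) : kˣ) : k)) * h.coeff f s)
    (by
      obtain ⟨N, hN⟩ := h.coeff_bounded f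
      exact ⟨N, fun s hs => by simp only []; rw [hN s hs, mul_zero]⟩))

/-- A two-sided ideal of `L` is `H`-stable if it is mapped to itself by every element
of the torus `H = (kˣ)^n`. -/
def IsHStable (I : TwoSidedIdeal L) : Prop :=
  ∀ θ : Fin n → kˣ, h.hAct θ '' (I : Set L) = (I : Set L)

end IsQLaurentSeriesRing

/-- A two-sided ideal `P` of a (possibly noncommutative) ring `A` is prime if `P ≠ A`
and whenever `I, J` are two-sided ideals with `IJ ⊆ P`, then `I ⊆ P` or `J ⊆ P`. -/
def IsPrimeTwoSided {A : Type*} [Ring A] (P : TwoSidedIdeal A) : Prop :=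
  P ≠ ⊤ ∧ ∀ I J : TwoSidedIdeal A, (∀ a ∈ I, ∀ b ∈ J, a * b ∈ P) → I ≤ P ∨ J ≤ P


/-!
If some `x_i` lies in `P₁ \ P₀`, it is itself normal: `x^s f = f' x^s`, where `f'` rescales the
coefficients of `f`. Otherwise let `w = {i | x_i ∈ P₁}`, so that `J_w ⊆ P₀`, and split `f ∈ P₁ \ P₀`
into components according to the character `u ↦ (σ(e_i, u))_{i ∉ w}` of its exponents. Modulo
`J_w` every series is supported on exponents avoiding `w`, and these commute with a component up
to rescaling, so every component is normal modulo `P₀`. As `x_i ∉ P₁` for `i ∉ w`, primeness makes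
`P₁` stable under the rescaling `f ↦ f'` attached to `x_i`, and Lagrange interpolation in the
values of the character then puts every component of `f` into `P₁`; not all of them lie in `P₀`,
since `f` does not. Both facts pass from finite truncations to whole series because every left
ideal `I` of `R` is closed for coefficientwise convergence: by Dickson's lemma the initial exponents
(for the degree-lexicographic order) of elements of `I` are multiples of those of finitely many
`g_b ∈ I`, and the remainder of a limit of elements of `I` upon division by the `g_b` is again such
a limit, but has no admissible initial exponent, hence vanishes.
-/

open Finset MonomialOrder

theorem IsPrimeTwoSided.mem_or_mem {A : Type*} [Ring A] {P : TwoSidedIdeal A}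
    (hP : IsPrimeTwoSided P) {a b : A} (H : ∀ r, a * r * b ∈ P) : a ∈ P ∨ b ∈ P := by
  have hb : ∀ y ∈ TwoSidedIdeal.span {b}, ∀ r, a * r * y ∈ P := by
    intro y hy
    induction hy using TwoSidedIdeal.span_induction with
    | mem x hx => rw [Set.mem_singleton_iff.mp hx]; exact H
    | zero => simp
    | add x y _ _ hx hy => intro r; rw [mul_add]; exact P.add_mem (hx r) (hy r)
    | neg x _ hx => intro r; rw [mul_neg]; exact P.neg_mem (hx r)
    | left_absorb c x _ hx => intro r; rw [← mul_assoc, mul_assoc a r c]; exact hx (r * c)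
    | right_absorb c x _ hx => intro r; rw [← mul_assoc]; exact P.mul_mem_right _ _ (hx r)
  have hab : ∀ x ∈ TwoSidedIdeal.span {a}, ∀ y ∈ TwoSidedIdeal.span {b}, ∀ r, x * r * y ∈ P := by
    intro x hx
    induction hx using TwoSidedIdeal.span_induction with
    | mem x hx => rw [Set.mem_singleton_iff.mp hx]; exact hb
    | zero => simp
    | add x x' _ _ hx hx' =>
      intro y hy r
      rw [add_mul, add_mul]
      exact P.add_mem (hx y hy r) (hx' y hy r)
    | neg x _ hx => intro y hy r; rw [neg_mul, neg_mul]; exact P.neg_mem (hx y hy r)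
    | left_absorb c x _ hx =>
      intro y hy r
      rw [mul_assoc, mul_assoc, ← mul_assoc x]
      exact P.mul_mem_left _ _ (hx y hy r)
    | right_absorb c x _ hx => intro y hy r; rw [mul_assoc x]; exact hx y hy (c * r)
  refine (hP.2 _ _ fun x hx y hy => by simpa using hab x hx y hy 1).imp ?_ ?_ <;>
    exact fun hle => hle (TwoSidedIdeal.subset_span rfl)

def IsNormalMod {A : Type*} [Ring A] (P : TwoSidedIdeal A) (y : A) : Prop :=
  {a : A | ∃ r : A, ∃ p ∈ P, a = r * y + p} = {a : A | ∃ r : A, ∃ p ∈ P, a = y * r + p}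

theorem isNormalMod_of_forall_exists {A : Type*} [Ring A] {P : TwoSidedIdeal A} {y : A}
    (hl : ∀ r, ∃ r', r * y - y * r' ∈ P) (hr : ∀ r, ∃ r', y * r - r' * y ∈ P) :
    IsNormalMod P y := by
  ext a
  constructor
  · rintro ⟨r, p, hp, rfl⟩
    obtain ⟨r', hr'⟩ := hl r
    exact ⟨r', _, P.add_mem hr' hp, by abel⟩
  · rintro ⟨r, p, hp, rfl⟩
    obtain ⟨r', hr'⟩ := hr r
    exact ⟨r', _, P.add_mem hr' hp, by abel⟩

theorem exists_finset_forall_exists_le {α : Type*} [PartialOrder α] [WellQuasiOrderedLE α]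
    (U : Set α) : ∃ B : Finset α, ↑B ⊆ U ∧ ∀ u ∈ U, ∃ b ∈ B, b ≤ u := by
  have hfin : {x | Minimal (· ∈ U) x}.Finite :=
    WellQuasiOrderedLE.finite_of_isAntichain (setOfPred_minimal_antichain _)
  refine ⟨hfin.toFinset, fun x hx => (hfin.mem_toFinset.mp hx).prop, fun u hu => ?_⟩
  obtain ⟨b, hbu, hb⟩ := exists_minimal_le_of_wellFoundedLT (· ∈ U) u hu
  exact ⟨b, hfin.mem_toFinset.mpr hb, hbu⟩

theorem WellFounded.exists_forall_eq {α β : Type*} [Nonempty β] {r : α → α → Prop}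
    (hr : WellFounded r) (F : α → (α → β) → β)
    (hF : ∀ x f g, (∀ y, r y x → f y = g y) → F x f = F x g) : ∃ f : α → β, ∀ x, f x = F x f := by
  classical
  refine ⟨hr.fix fun x rec => F x fun y => if hy : r y x then rec y hy else Classical.arbitrary β,
    fun x => ?_⟩
  rw [hr.fix_eq]
  exact hF _ _ _ fun y hy => dif_pos hy

theorem Subalgebra.exists_mem_eqOn_indicator {E ι k : Type*} [Field k] (A : Subalgebra k (E → k))
    (F : E → ι → k) (hF : ∀ i, (fun u => F u i) ∈ A) (T : Finset E) (χ : ι → k) :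
    ∃ φ ∈ A, ∀ u ∈ T, φ u = (F ⁻¹' {χ}).indicator 1 u := by
  classical
  have hsep : ∀ χ' : {χ' // χ' ≠ χ}, ∃ i, χ'.1 i ≠ χ i := fun χ' => Function.ne_iff.mp χ'.2
  choose i hi using hsep
  -- Lagrange interpolation, separating `χ` from each other value of `F` on `T` by one coordinate
  refine ⟨∏ χ' ∈ (T.image F).subtype (· ≠ χ),
      (χ (i χ') - χ'.1 (i χ'))⁻¹ • ((fun u => F u (i χ')) - algebraMap k _ (χ'.1 (i χ'))),
    prod_mem fun χ' _ => A.smul_mem (A.sub_mem (hF _) (A.algebraMap_mem _)) _, fun u hu => ?_⟩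
  simp only [Finset.prod_apply, Pi.smul_apply, Pi.sub_apply, Pi.algebraMap_apply,
    Algebra.algebraMap_self, RingHom.id_apply, smul_eq_mul, Set.indicator_apply,
    Set.mem_preimage, Set.mem_singleton_iff, Pi.one_apply]
  split_ifs with hu'
  · subst hu'
    exact prod_eq_one fun χ' _ => inv_mul_cancel₀ (sub_ne_zero.mpr (hi χ').symm)
  · exact prod_eq_zero (i := ⟨F u, hu'⟩) (by simpa using ⟨u, hu, rfl⟩) (by simp)

theorem finite_setOf_degLex_le {σ : Type*} [LinearOrder σ] [Finite σ] (u : σ →₀ ℕ) :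
    {v | v ≼[degLex] u}.Finite :=
  (Finsupp.finite_of_degree_le u.degree).subset fun _ hv => Finsupp.DegLex.monotone_degree hv

namespace QMatrix

variable {k : Type*} [Field k] {n : ℕ} (Q : QMatrix k n)

/-- `x^u x^v = sigmaNat u v • x^v x^u` in `R`; the `ℕ`-exponent counterpart of
`QMatrix.sigma`. -/
def sigmaNat (u v : Fin n →₀ ℕ) : k :=
  ∏ i, ∏ j, Q.q i j ^ (u i * v j)

theorem weight_ne_zero (u v : Fin n →₀ ℕ) : Q.weight u v ≠ 0 :=
  prod_ne_zero_iff.mpr fun i _ => prod_ne_zero_iff.mpr fun j _ => by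
    split_ifs
    exacts [pow_ne_zero _ (Q.q_ne_zero i j), one_ne_zero]

theorem weight_eq_sigmaNat_mul (u v : Fin n →₀ ℕ) :
    Q.weight u v = Q.sigmaNat u v * Q.weight v u := by
  let upper := ∏ i, ∏ j, if i < j then Q.q i j ^ (u i * v j) else 1
  have hsigma : Q.sigmaNat u v = Q.weight u v * upper := by
    simp only [sigmaNat, weight, upper, ← prod_mul_distrib]
    refine prod_congr rfl fun i _ => prod_congr rfl fun j _ => ?_
    rcases lt_trichotomy i j with hij | rfl | hij
    · simp [hij, hij.not_gt]
    · simp [Q.diag]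
    · simp [hij, hij.not_gt]
  have hupper : upper * Q.weight v u = 1 := by
    rw [show upper = _ from prod_comm, weight, ← prod_mul_distrib]
    refine prod_eq_one fun i _ => ?_
    rw [← prod_mul_distrib]
    refine prod_eq_one fun j _ => ?_
    split_ifs
    · rw [mul_comm (v i), ← mul_pow, Q.antisym, one_pow]
    · exact one_mul 1
  rw [hsigma, mul_assoc, hupper, mul_one]

theorem sigmaNat_mul_sigmaNat (u v : Fin n →₀ ℕ) : Q.sigmaNat u v * Q.sigmaNat v u = 1 := by
  refine mul_right_cancel₀ (Q.weight_ne_zero u v) ?_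
  rw [mul_assoc, ← Q.weight_eq_sigmaNat_mul, ← Q.weight_eq_sigmaNat_mul, one_mul]

/-- `x_i x^u = conjChar w u i • x^u x_i` for `i ∉ w`. -/
def conjChar (w : Finset (Fin n)) (u : Fin n →₀ ℕ) (i : Fin n) : k :=
  if i ∈ w then 1 else Q.sigmaNat (Finsupp.single i 1) u

theorem sigmaNat_eq_prod_pow {w : Finset (Fin n)} {a u : Fin n →₀ ℕ} {χ : Fin n → k}
    (ha : ∀ i ∈ w, a i = 0) (hu : Q.conjChar w u = χ) :
    Q.sigmaNat a u = ∏ i, χ i ^ a i := by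
  subst hu
  refine prod_congr rfl fun i _ => ?_
  by_cases hi : i ∈ w
  · simp [ha i hi]
  · simp [conjChar, hi, sigmaNat, Finsupp.single_apply, ← prod_pow, ← pow_mul, mul_comm]

end QMatrix

namespace IsQPowerSeriesRing

variable {k : Type*} [Field k] {n : ℕ} {Q : QMatrix k n}
variable {R : Type*} [Ring R] [Algebra k R] (h : IsQPowerSeriesRing Q R)

theorem ext_coeff {f g : R} (H : ∀ u, h.coeff f u = h.coeff g u) : f = g :=
  h.coeff.injective (funext H)

theorem coeff_mono (s t : Fin n →₀ ℕ) : h.coeff (h.mono s) t = if t = s then 1 else 0 := by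
  simp [mono]

theorem coeff_mono_mul_add (t u : Fin n →₀ ℕ) (f : R) :
    h.coeff (h.mono t * f) (t + u) = Q.weight t u * h.coeff f u := by
  rw [h.coeff_mul, sum_eq_single (t, u)]
  · simp [coeff_mono, mul_comm]
  · rintro ⟨t', u'⟩ htu hne
    obtain rfl | ht := eq_or_ne t' t
    · exact absurd (by simpa using mem_antidiagonal.mp htu) hne
    · simp [coeff_mono, ht]
  · simp

theorem coeff_mono_mul_of_not_le {t s : Fin n →₀ ℕ} (hts : ¬ t ≤ s) (f : R) :
    h.coeff (h.mono t * f) s = 0 := by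
  refine h.coeff_mul _ _ _ ▸ sum_eq_zero fun p hp => ?_
  have hp1 : p.1 ≠ t := fun hp1 => hts (hp1 ▸ le_of_add_le_left (mem_antidiagonal.mp hp).le)
  simp [coeff_mono, hp1]

def scale (φ : (Fin n →₀ ℕ) → k) : R →ₗ[k] R :=
  h.coeff.symm.toLinearMap ∘ₗ LinearMap.mulLeft k φ ∘ₗ h.coeff.toLinearMap

@[simp]
theorem coeff_scale (φ : (Fin n →₀ ℕ) → k) (f : R) (u : Fin n →₀ ℕ) :
    h.coeff (h.scale φ f) u = φ u * h.coeff f u := by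
  simp [scale]

theorem scale_mul (φ ψ : (Fin n →₀ ℕ) → k) (f : R) :
    h.scale (φ * ψ) f = h.scale φ (h.scale ψ f) :=
  h.ext_coeff fun u => by simp [mul_assoc]

theorem scale_add (φ ψ : (Fin n →₀ ℕ) → k) (f : R) :
    h.scale (φ + ψ) f = h.scale φ f + h.scale ψ f :=
  h.ext_coeff fun u => by simp [add_mul]

theorem scale_algebraMap (c : k) (f : R) : h.scale (algebraMap k _ c) f = c • f :=
  h.ext_coeff fun u => by simp

def restrict (s : Set (Fin n →₀ ℕ)) : R →ₗ[k] R := h.scale (s.indicator 1)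

theorem coeff_restrict (s : Set (Fin n →₀ ℕ)) (f : R) (u : Fin n →₀ ℕ) :
    h.coeff (h.restrict s f) u = s.indicator (h.coeff f) u := by
  classical
  simp only [restrict, coeff_scale, Set.indicator_apply]
  split_ifs <;> simp

theorem mul_eq_mul_scale {r y : R} (c : (Fin n →₀ ℕ) → k)
    (hc : ∀ a u, h.coeff r a ≠ 0 → h.coeff y u ≠ 0 → Q.weight a u = c a * Q.weight u a) :
    r * y = y * h.scale c r := by
  refine h.ext_coeff fun s => ?_
  rw [h.coeff_mul, h.coeff_mul]
  refine sum_equiv (Equiv.prodComm _ _) (by simp [add_comm]) fun p _ => ?_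
  simp only [Equiv.prodComm_apply, Prod.fst_swap, Prod.snd_swap, coeff_scale]
  by_cases hr : h.coeff r p.1 = 0
  · simp [hr]
  by_cases hy : h.coeff y p.2 = 0
  · simp [hy]
  rw [hc _ _ hr hy]
  ring

theorem mul_eq_scale_mul {r y : R} (c : (Fin n →₀ ℕ) → k)
    (hc : ∀ a u, h.coeff r a ≠ 0 → h.coeff y u ≠ 0 → Q.weight u a = c a * Q.weight a u) :
    y * r = h.scale c r * y := by
  refine h.ext_coeff fun s => ?_
  rw [h.coeff_mul, h.coeff_mul]
  refine sum_equiv (Equiv.prodComm _ _) (by simp [add_comm]) fun p _ => ?_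
  simp only [Equiv.prodComm_apply, Prod.fst_swap, Prod.snd_swap, coeff_scale]
  by_cases hr : h.coeff r p.2 = 0
  · simp [hr]
  by_cases hy : h.coeff y p.1 = 0
  · simp [hy]
  rw [hc _ _ hr hy]
  ring

theorem mono_mul (s : Fin n →₀ ℕ) (f : R) : h.mono s * f = h.scale (Q.sigmaNat s) f * h.mono s :=
  h.mul_eq_scale_mul _ fun a u _ hu => by
    rw [coeff_mono, ite_ne_right_iff] at hu
    rw [hu.1, Q.weight_eq_sigmaNat_mul]

theorem mul_mono (f : R) (s : Fin n →₀ ℕ) :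
    f * h.mono s = h.mono s * h.scale (fun a => Q.sigmaNat a s) f :=
  h.mul_eq_mul_scale _ fun a u _ hu => by
    rw [coeff_mono, ite_ne_right_iff] at hu
    rw [hu.1, Q.weight_eq_sigmaNat_mul]

theorem isNormalMod_mono (P : TwoSidedIdeal R) (s : Fin n →₀ ℕ) : IsNormalMod P (h.mono s) :=
  isNormalMod_of_forall_exists (fun r => ⟨_, by rw [h.mul_mono, sub_self]; exact P.zero_mem⟩)
    fun r => ⟨_, by rw [h.mono_mul, sub_self]; exact P.zero_mem⟩

theorem exists_mono_mul_eq {s : Fin n →₀ ℕ} {g : R} (hg : ∀ u, h.coeff g u ≠ 0 → s ≤ u) :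
    ∃ f, h.mono s * f = g := by
  refine ⟨h.coeff.symm fun u => (Q.weight s u)⁻¹ * h.coeff g (s + u), h.ext_coeff fun t => ?_⟩
  by_cases hst : s ≤ t
  · obtain ⟨u, rfl⟩ := exists_add_of_le hst
    simp [coeff_mono_mul_add, Q.weight_ne_zero]
  · rw [coeff_mono_mul_of_not_le h hst]
    by_contra hne
    exact hst (hg t (Ne.symm hne))

theorem mem_Jw_of_forall_coeff_ne_zero {w : Finset (Fin n)} {g : R}
    (hg : ∀ u, h.coeff g u ≠ 0 → ∃ i ∈ w, u i ≠ 0) : g ∈ h.Jw w := by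
  induction w using Finset.induction_on generalizing g with
  | empty =>
    convert (h.Jw ∅).zero_mem
    exact h.ext_coeff fun u => by_contra fun hu => by simpa using hg u (by simpa using hu)
  | insert i w _ ih =>
    obtain ⟨f, hf⟩ := h.exists_mono_mul_eq (s := Finsupp.single i 1)
      (g := h.restrict {u | u i ≠ 0} g) fun u hu => by
        rw [coeff_restrict] at hu
        exact Finsupp.single_le_iff.mpr
          (Nat.one_le_iff_ne_zero.mpr (Set.mem_of_indicator_ne_zero hu))
    have hrest : g - h.restrict {u | u i ≠ 0} g ∈ h.Jw w := ih fun u hu => by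
      rw [map_sub, Pi.sub_apply, coeff_restrict] at hu
      by_cases hui : u i = 0
      · obtain ⟨j, hj, hju⟩ := hg u (by simpa [hui] using hu)
        exact ⟨j, (mem_insert.mp hj).resolve_left (by rintro rfl; exact hju hui), hju⟩
      · simp [hui] at hu
    rw [show g = h.mono _ * f + (g - h.restrict {u | u i ≠ 0} g) by rw [hf]; abel]
    refine (h.Jw _).add_mem
      ((h.Jw _).mul_mem_right _ _ (TwoSidedIdeal.subset_span ⟨i, mem_insert_self i w, rfl⟩)) ?_
    exact TwoSidedIdeal.span_mono
      (by rintro x ⟨j, hj, rfl⟩; exact ⟨j, mem_insert_of_mem hj, rfl⟩) hrest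

theorem sub_restrict_mem_Jw (w : Finset (Fin n)) (f : R) :
    f - h.restrict {u | ∀ i ∈ w, u i = 0} f ∈ h.Jw w :=
  h.mem_Jw_of_forall_coeff_ne_zero fun u hu => by
    by_contra! H
    rw [map_sub, Pi.sub_apply, coeff_restrict,
      Set.indicator_of_mem (show u ∈ {u : Fin n →₀ ℕ | ∀ i ∈ w, u i = 0} from H), sub_self] at hu
    exact hu rfl

def IsInitialExp (f : R) (u : Fin n →₀ ℕ) : Prop :=
  h.coeff f u ≠ 0 ∧ ∀ v, v ≺[degLex] u → h.coeff f v = 0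

theorem exists_isInitialExp {f : R} (hf : f ≠ 0) : ∃ u, h.IsInitialExp f u := by
  have hsupp : {u | h.coeff f u ≠ 0}.Nonempty := by
    by_contra! H
    exact hf (h.ext_coeff fun u => by simpa using Set.eq_empty_iff_forall_notMem.mp H u)
  obtain ⟨u, hu, hmin⟩ := (InvImage.wf degLex.toSyn wellFounded_lt).has_min _ hsupp
  exact ⟨u, hu, fun v hv => by_contra fun hv' => hmin v hv' hv⟩

theorem coeff_mul_eq_of_forall_lt {D g : R} {b v : Fin n →₀ ℕ}
    (hD : ∀ t, t + b ≺[degLex] v → h.coeff D t = 0) (hg : ∀ w, w ≺[degLex] b → h.coeff g w = 0) :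
    h.coeff (D * g) v = if b ≤ v then h.coeff D (v - b) * h.coeff g b * Q.weight (v - b) b
      else 0 := by
  have hterm : ∀ p ∈ antidiagonal v, h.coeff D p.1 * h.coeff g p.2 ≠ 0 → p.2 = b := by
    rintro ⟨t, w⟩ htw hne
    rw [HasAntidiagonal.mem_antidiagonal] at htw
    rcases lt_trichotomy (degLex.toSyn w) (degLex.toSyn b) with hlt | heq | hgt
    · simp [hg w hlt] at hne
    · exact degLex.toSyn.injective heq
    · have : t + b ≺[degLex] v := by
        simpa [← htw, map_add] using add_lt_add_right hgt (degLex.toSyn t)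
      simp [hD t this] at hne
  rw [h.coeff_mul]
  split_ifs with hbv
  · refine sum_eq_single (v - b, b) (fun p hp hne => ?_) (by simp [tsub_add_cancel_of_le hbv])
    by_contra hp'
    refine hne (Prod.ext ?_ (hterm p hp (left_ne_zero_of_mul hp')))
    rw [← HasAntidiagonal.mem_antidiagonal.mp hp, hterm p hp (left_ne_zero_of_mul hp'),
      add_tsub_cancel_right]
  · refine sum_eq_zero fun p hp => ?_
    by_contra hp'
    exact hbv (hterm p hp (left_ne_zero_of_mul hp') ▸
      le_add_self.trans_eq (HasAntidiagonal.mem_antidiagonal.mp hp))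

/-- The quotients in division with remainder: each exponent `v` is divided only by `β v`, so
`quotSeries β c b = ∑_{β v = b} c v • x^(v - b)`. -/
def quotSeries (β : (Fin n →₀ ℕ) → Fin n →₀ ℕ) (c : (Fin n →₀ ℕ) → k) (b : Fin n →₀ ℕ) : R :=
  h.coeff.symm fun t => if β (t + b) = b then c (t + b) else 0

theorem quotSeries_add (β : (Fin n →₀ ℕ) → Fin n →₀ ℕ) (c c' : (Fin n →₀ ℕ) → k)
    (b : Fin n →₀ ℕ) : h.quotSeries β (c + c') b = h.quotSeries β c b + h.quotSeries β c' b :=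
  h.ext_coeff fun t => by by_cases hb : β (t + b) = b <;> simp [quotSeries, hb]

theorem coeff_sum_quotSeries_mul {B : Finset (Fin n →₀ ℕ)} {g : (Fin n →₀ ℕ) → R}
    (hg : ∀ b ∈ B, h.IsInitialExp (g b) b) {β : (Fin n →₀ ℕ) → Fin n →₀ ℕ}
    {c : (Fin n →₀ ℕ) → k} {v : Fin n →₀ ℕ} (hβv : β v ∈ B ∧ β v ≤ v)
    (hc : ∀ w, w ≺[degLex] v → c w = 0) :
    h.coeff (∑ b ∈ B, h.quotSeries β c b * g b) v =
      c v * h.coeff (g (β v)) (β v) * Q.weight (v - β v) (β v) := by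
  have hD : ∀ b t, t + b ≺[degLex] v → h.coeff (h.quotSeries β c b) t = 0 := fun b t ht => by
    simp [quotSeries, hc _ ht]
  rw [map_sum, Finset.sum_apply, sum_eq_single (β v)]
  · rw [h.coeff_mul_eq_of_forall_lt (hD _) (hg _ hβv.1).2, if_pos hβv.2]
    simp [quotSeries, tsub_add_cancel_of_le hβv.2]
  · intro b hb hne
    rw [h.coeff_mul_eq_of_forall_lt (hD b) (hg b hb).2]
    split_ifs with hbv
    · simp [quotSeries, tsub_add_cancel_of_le hbv, Ne.symm hne]
    · rfl
  · exact fun hnot => (hnot hβv.1).elim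

theorem exists_forall_coeff_sub_sum_mul_eq_zero (B : Finset (Fin n →₀ ℕ))
    (g : (Fin n →₀ ℕ) → R) (hg : ∀ b ∈ B, h.IsInitialExp (g b) b) (f : R) :
    ∃ C : (Fin n →₀ ℕ) → R,
      ∀ v, (∃ b ∈ B, b ≤ v) → h.coeff (f - ∑ b ∈ B, C b * g b) v = 0 := by
  classical
  have hβ : ∀ v, ∃ b, (∃ b ∈ B, b ≤ v) → b ∈ B ∧ b ≤ v := fun v =>
    (em (∃ b ∈ B, b ≤ v)).elim (fun ⟨b, hb⟩ => ⟨b, fun _ => hb⟩) fun hv => ⟨0, hv.elim⟩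
  choose β hβ using hβ
  let below (v : Fin n →₀ ℕ) : Set (Fin n →₀ ℕ) := {w | w ≺[degLex] v}
  -- `a v` is chosen to kill the coefficient at `v` of the remainder, which by
  -- `coeff_sum_quotSeries_mul` only involves the values of `a` below `v`
  obtain ⟨a, ha⟩ := (InvImage.wf degLex.toSyn wellFounded_lt).exists_forall_eq
    (fun v A => if ∃ b ∈ B, b ≤ v then
      (h.coeff f v - h.coeff (∑ b ∈ B, h.quotSeries β ((below v).indicator A) b * g b) v) /
        (h.coeff (g (β v)) (β v) * Q.weight (v - β v) (β v)) else 0)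
    fun v A A' hAA' => by
      rw [show (below v).indicator A = (below v).indicator A' from
        Set.indicator_congr fun w hw => hAA' w hw]
  refine ⟨h.quotSeries β a, fun v hv => ?_⟩
  have hlc : h.coeff (g (β v)) (β v) * Q.weight (v - β v) (β v) ≠ 0 :=
    mul_ne_zero (hg _ (hβ v hv).1).1 (Q.weight_ne_zero _ _)
  have htail := h.coeff_sum_quotSeries_mul hg (hβ v hv) (c := (below v)ᶜ.indicator a)
    fun w hw => Set.indicator_of_notMem (not_not.mpr hw) a
  have hsplit : ∑ b ∈ B, h.quotSeries β a b * g b =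
      ∑ b ∈ B, h.quotSeries β ((below v).indicator a) b * g b +
        ∑ b ∈ B, h.quotSeries β ((below v)ᶜ.indicator a) b * g b := by
    rw [← sum_add_distrib]
    exact sum_congr rfl fun b _ => by rw [← add_mul, ← quotSeries_add, Set.indicator_self_add_compl]
  rw [hsplit, map_sub, map_add, Pi.sub_apply, Pi.add_apply, htail,
    Set.indicator_of_mem (show v ∈ (below v)ᶜ from lt_irrefl (degLex.toSyn v)), ha v, if_pos hv,
    mul_assoc, div_mul_cancel₀ _ hlc]
  ring

def MemClosure (S : Set R) (f : R) : Prop :=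
  ∀ T : Finset (Fin n →₀ ℕ), ∃ g ∈ S, ∀ u ∈ T, h.coeff g u = h.coeff f u

theorem MemClosure.exists_isInitialExp {S : Set R} {f : R} (hf : h.MemClosure S f) {u : Fin n →₀ ℕ}
    (hu : h.IsInitialExp f u) : ∃ g ∈ S, h.IsInitialExp g u := by
  obtain ⟨g, hgS, hg⟩ := hf (finite_setOf_degLex_le u).toFinset
  refine ⟨g, hgS, ?_, fun v hv => ?_⟩
  · rw [hg u (by simp)]
    exact hu.1
  · rw [hg v (by simpa using hv.le)]
    exact hu.2 v hv

theorem MemClosure.sub_mem {I : Ideal R} {f a : R} (hf : h.MemClosure I f) (ha : a ∈ I) :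
    h.MemClosure I (f - a) := fun T =>
  let ⟨g, hg, hgT⟩ := hf T
  ⟨g - a, I.sub_mem hg ha, fun u hu => by simp [hgT u hu]⟩

theorem mem_of_memClosure (I : Ideal R) {f : R} (hf : h.MemClosure I f) : f ∈ I := by
  classical
  obtain ⟨B, hBI, hB⟩ := exists_finset_forall_exists_le {u | ∃ g ∈ I, h.IsInitialExp g u}
  choose! g hgI hg using fun b (hb : b ∈ B) => hBI hb
  obtain ⟨C, hC⟩ := h.exists_forall_coeff_sub_sum_mul_eq_zero B g hg f
  have hsum : ∑ b ∈ B, C b * g b ∈ I := sum_mem fun b hb => I.mul_mem_left _ (hgI b hb)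
  suffices f - ∑ b ∈ B, C b * g b = 0 by rwa [sub_eq_zero.mp this]
  by_contra hr
  obtain ⟨u, hu⟩ := h.exists_isInitialExp hr
  obtain ⟨b, hb, hbu⟩ := hB u ((hf.sub_mem h hsum).exists_isInitialExp h hu)
  exact hu.1 (hC u ⟨b, hb, hbu⟩)

theorem mem_of_memClosure_twoSided (P : TwoSidedIdeal R) {f : R} (hf : h.MemClosure P f) : f ∈ P :=
  TwoSidedIdeal.mem_asIdeal.mp (h.mem_of_memClosure P.asIdeal hf)

def scaleStabilizer (P : TwoSidedIdeal R) : Subalgebra k ((Fin n →₀ ℕ) → k) where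
  carrier := {φ | ∀ f ∈ P, h.scale φ f ∈ P}
  mul_mem' {φ ψ} hφ hψ f hf := by rw [scale_mul]; exact hφ _ (hψ f hf)
  add_mem' {φ ψ} hφ hψ f hf := by rw [scale_add]; exact P.add_mem (hφ f hf) (hψ f hf)
  algebraMap_mem' c f hf := by
    rw [scale_algebraMap, Algebra.smul_def]
    exact P.mul_mem_left _ _ hf

theorem sigmaNat_mem_scaleStabilizer {P : TwoSidedIdeal R} (hP : IsPrimeTwoSided P)
    {s : Fin n →₀ ℕ} (hs : h.mono s ∉ P) : Q.sigmaNat s ∈ h.scaleStabilizer P := by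
  intro f hf
  refine (hP.mem_or_mem fun r => ?_).resolve_right hs
  rw [mul_assoc, h.mul_mono, ← mul_assoc, ← h.mono_mul]
  exact P.mul_mem_right _ _ (P.mul_mem_left _ _ hf)

theorem restrict_mem {P : TwoSidedIdeal R} {s : Set (Fin n →₀ ℕ)}
    (hs : ∀ T : Finset (Fin n →₀ ℕ), ∃ φ ∈ h.scaleStabilizer P, ∀ u ∈ T, φ u = s.indicator 1 u)
    {f : R} (hf : f ∈ P) : h.restrict s f ∈ P := by
  refine h.mem_of_memClosure_twoSided P fun T => ?_
  obtain ⟨φ, hφ, hφT⟩ := hs T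
  refine ⟨h.scale φ f, hφ f hf, fun u hu => ?_⟩
  rw [coeff_scale, coeff_restrict, hφT u hu]
  by_cases hus : u ∈ s <;> simp [hus]

theorem coeff_sum_restrict_preimage {ι : Type*} [DecidableEq ι] (F : (Fin n →₀ ℕ) → ι)
    (T : Finset (Fin n →₀ ℕ)) (f : R) {u : Fin n →₀ ℕ} (hu : u ∈ T) :
    h.coeff (∑ c ∈ T.image F, h.restrict (F ⁻¹' {c}) f) u = h.coeff f u := by
  rw [map_sum, Finset.sum_apply, sum_eq_single (F u)]
  · simp [coeff_restrict]
  · intro c _ hc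
    simp [coeff_restrict, Ne.symm hc]
  · exact fun hnot => (hnot (mem_image_of_mem F hu)).elim

theorem isNormalMod_restrict_conjChar {P : TwoSidedIdeal R} {w : Finset (Fin n)} (hw : h.Jw w ≤ P)
    (χ : Fin n → k) (f : R) : IsNormalMod P (h.restrict (Q.conjChar w ⁻¹' {χ}) f) := by
  set y := h.restrict (Q.conjChar w ⁻¹' {χ}) f
  set V : Set (Fin n →₀ ℕ) := {u | ∀ i ∈ w, u i = 0}
  have hy : ∀ u, h.coeff y u ≠ 0 → Q.conjChar w u = χ := fun u hu => by
    rw [coeff_restrict] at hu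
    simpa using Set.mem_of_indicator_ne_zero hu
  have hV : ∀ r a, h.coeff (h.restrict V r) a ≠ 0 → ∀ i ∈ w, a i = 0 := fun r a ha => by
    rw [coeff_restrict] at ha
    exact Set.mem_of_indicator_ne_zero ha
  have hrest : ∀ r, r - h.restrict V r ∈ P := fun r => hw (h.sub_restrict_mem_Jw w r)
  -- modulo `J_w ⊆ P` only the part of `r` avoiding `w` matters, and it twists past `y` by `χ`
  refine isNormalMod_of_forall_exists
    (fun r => ⟨h.scale (fun a => ∏ i, χ i ^ a i) (h.restrict V r), ?_⟩)
    (fun r => ⟨h.scale (fun a => (∏ i, χ i ^ a i)⁻¹) (h.restrict V r), ?_⟩)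
  · rw [← h.mul_eq_mul_scale _ fun a u ha hu => by
      rw [Q.weight_eq_sigmaNat_mul, Q.sigmaNat_eq_prod_pow (hV r a ha) (hy u hu)], ← sub_mul]
    exact P.mul_mem_right _ _ (hrest r)
  · rw [← h.mul_eq_scale_mul _ fun a u ha hu => by
      rw [Q.weight_eq_sigmaNat_mul, eq_inv_of_mul_eq_one_left (Q.sigmaNat_mul_sigmaNat u a),
        Q.sigmaNat_eq_prod_pow (hV r a ha) (hy u hu)], ← mul_sub]
    exact P.mul_mem_left _ _ (hrest r)

theorem conjChar_mem_scaleStabilizer {P : TwoSidedIdeal R} (hP : IsPrimeTwoSided P)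
    {w : Finset (Fin n)} (hw : ∀ i ∉ w, h.X i ∉ P) (i : Fin n) :
    (fun u => Q.conjChar w u i) ∈ h.scaleStabilizer P := by
  by_cases hi : i ∈ w
  · simp only [QMatrix.conjChar, if_pos hi]
    exact (h.scaleStabilizer P).one_mem
  · simpa [QMatrix.conjChar, hi] using h.sigmaNat_mem_scaleStabilizer hP (hw i hi)

theorem exists_isNormalMod {P₀ P₁ : TwoSidedIdeal R} (hP₁ : IsPrimeTwoSided P₁)
    {w : Finset (Fin n)} (hw₁ : ∀ i ∉ w, h.X i ∉ P₁) (hw₀ : h.Jw w ≤ P₀) {f : R} (hf₁ : f ∈ P₁)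
    (hf₀ : f ∉ P₀) : ∃ y ∈ P₁, y ∉ P₀ ∧ IsNormalMod P₀ y := by
  classical
  have hcomp : ∀ χ, h.restrict (Q.conjChar w ⁻¹' {χ}) f ∈ P₁ := fun χ =>
    h.restrict_mem (fun T => (h.scaleStabilizer P₁).exists_mem_eqOn_indicator _
      (h.conjChar_mem_scaleStabilizer hP₁ hw₁) T χ) hf₁
  obtain ⟨χ, hχ⟩ : ∃ χ, h.restrict (Q.conjChar w ⁻¹' {χ}) f ∉ P₀ := by
    by_contra! H
    exact hf₀ (h.mem_of_memClosure_twoSided P₀ fun T =>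
      ⟨_, sum_mem fun χ _ => H χ, fun u hu => h.coeff_sum_restrict_preimage _ T f hu⟩)
  exact ⟨_, hcomp χ, hχ, h.isNormalMod_restrict_conjChar hw₀ χ f⟩

end IsQPowerSeriesRing

theorem stmt_15_general {k : Type*} [Field k] {n : ℕ} (Q : QMatrix k n)
    (R : Type*) [Ring R] [Algebra k R] (h : IsQPowerSeriesRing Q R)
    (P₀ P₁ : TwoSidedIdeal R) (hP₁ : IsPrimeTwoSided P₁)
    (hlt : P₀ < P₁) :
    ∃ y ∈ P₁, y ∉ P₀ ∧
      {a : R | ∃ r : R, ∃ p ∈ P₀, a = r * y + p} =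
        {a : R | ∃ r : R, ∃ p ∈ P₀, a = y * r + p} := by
  classical
  obtain ⟨f, hf₁, hf₀⟩ := SetLike.exists_of_lt hlt
  by_cases hX : ∃ i, h.X i ∈ P₁ ∧ h.X i ∉ P₀
  · obtain ⟨i, hi₁, hi₀⟩ := hX
    exact ⟨h.X i, hi₁, hi₀, h.isNormalMod_mono P₀ _⟩
  · push Not at hX
    refine h.exists_isNormalMod hP₁ (w := univ.filter fun i => h.X i ∈ P₁)
      (fun i hi => by simpa using hi) ?_ hf₁ hf₀
    exact TwoSidedIdeal.span_le.mpr fun _ ⟨i, hi, hx⟩ => hx ▸ hX i (by simpa using hi)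

/-- The prime spectrum of `R` is normally separated: whenever
`P₀ ⊊ P₁` are prime two-sided ideals of `R`, there exists `y ∈ P₁ \ P₀` that is normal
modulo `P₀`, i.e. `Ry + P₀ = yR + P₀`. -/
theorem stmt_15 {k : Type*} [Field k] {n : ℕ} (hn : 0 < n) (Q : QMatrix k n)
    (R : Type*) [Ring R] [Algebra k R] (h : IsQPowerSeriesRing Q R)
    (P₀ P₁ : TwoSidedIdeal R) (hP₀ : IsPrimeTwoSided P₀) (hP₁ : IsPrimeTwoSided P₁)
    (hlt : P₀ < P₁) :
    ∃ y ∈ P₁, y ∉ P₀ ∧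
      {a : R | ∃ r : R, ∃ p ∈ P₀, a = r * y + p} =
        {a : R | ∃ r : R, ∃ p ∈ P₀, a = y * r + p} :=
  stmt_15_general Q R h P₀ P₁ hP₁ hlt
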